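/- arXiv:1403.5287 — 4 statements merged into one kernel-verified Lean document; each statement's English description precedes it below -/
import Mathlib

section
/- If P and Q are probability distributions on a finite set with total variation distance δ (where total variation distance is defined as the sum of |p(x) - q(x)| over all x), then for any ε ∈ [0,1], the Shannon entropy satisfies H(εP + (1-ε)Q) ≥ ε·H(P) + (1-ε)·H(Q) + (1/4)·ε·(1-ε)·δ². -/
open Real Finset

lemma aux_convexOn {M : ℝ} (hM : 0 < M) :
    ConvexOn ℝ (Set.Icc 0 M) (fun t => t * Real.log t - t ^ 2 / (2 * M)) := by
  have h2M : (0:ℝ) < 2 * M := by linarith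
  apply convexOn_of_hasDerivWithinAt2_nonneg (convex_Icc 0 M)
    (f' := fun t => Real.log t + 1 - 2 * t / (2 * M))
    (f'' := fun t => t⁻¹ - 2 / (2 * M))
  · exact (Real.continuous_mul_log.sub (by continuity)).continuousOn
  · intro t ht
    rw [interior_Icc] at ht
    exact ((Real.hasDerivAt_mul_log ht.1.ne').sub
      (((hasDerivAt_pow 2 t).div_const (2*M)).congr_deriv (by ring))).hasDerivWithinAt
  · intro t ht
    rw [interior_Icc] at ht
    exact (((Real.hasDerivAt_log ht.1.ne').add_const 1).sub
      ((((hasDerivAt_id t).const_mul 2).div_const (2*M)).congr_deriv (by norm_num))).hasDerivWithinAt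
  · intro t ht
    rw [interior_Icc] at ht
    have h1 : M⁻¹ ≤ t⁻¹ := by
      apply inv_anti₀ ht.1 ht.2.le
    have : 2 / (2*M) = M⁻¹ := by field_simp
    rw [this]
    linarith

lemma aux_pointwise (a b ε : ℝ) (ha : 0 ≤ a) (hb : 0 ≤ b) (hε0 : 0 ≤ ε) (hε1 : ε ≤ 1) :
    (ε * (1 - ε) / 2) * ((a - b) ^ 2 / max a b) ≤
      ε * (a * Real.log a) + (1 - ε) * (b * Real.log b)
        - (ε * a + (1 - ε) * b) * Real.log (ε * a + (1 - ε) * b) := by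
  set M := max a b with hMdef
  have hM0 : 0 ≤ M := le_trans ha (le_max_left a b)
  rcases hM0.eq_or_lt with h | hM
  · -- M = 0 : a = b = 0
    have ha0 : a = 0 := le_antisymm (h ▸ le_max_left a b) ha
    have hb0 : b = 0 := le_antisymm (h ▸ le_max_right a b) hb
    simp [ha0, hb0, ← h]
  · have hconv := (aux_convexOn hM).2 (x := a) ⟨ha, le_max_left a b⟩ (y := b)
      ⟨hb, le_max_right a b⟩ hε0 (by linarith : (0:ℝ) ≤ 1 - ε) (by ring)
    simp only [smul_eq_mul] at hconv
    have h2M : (0:ℝ) < 2 * M := by linarith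
    have key : ε * a ^ 2 / (2*M) + (1-ε) * b ^ 2 / (2*M) - (ε*a + (1-ε)*b) ^ 2 / (2*M)
        = ε * (1 - ε) * (a - b) ^ 2 / (2 * M) := by
      field_simp
      ring
    have key2 : (ε * (1 - ε) / 2) * ((a - b) ^ 2 / M) = ε * (1 - ε) * (a - b) ^ 2 / (2 * M) := by
      field_simp
    have e1 : ε * (a * Real.log a - a^2/(2*M)) = ε*(a*Real.log a) - ε*a^2/(2*M) := by ring
    have e2 : (1-ε) * (b * Real.log b - b^2/(2*M)) = (1-ε)*(b*Real.log b) - (1-ε)*b^2/(2*M) := by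
      ring
    rw [key2]
    linarith [hconv, key, e1, e2]

lemma aux_cs {X : Type*} [Fintype X] (p q : X → ℝ)
    (hp0 : ∀ x, 0 ≤ p x) (hq0 : ∀ x, 0 ≤ q x)
    (hp1 : ∑ x, p x = 1) (hq1 : ∑ x, q x = 1) :
    (∑ x, |p x - q x|) ^ 2 ≤ 2 * ∑ x, (p x - q x) ^ 2 / max (p x) (q x) := by
  classical
  set s : Finset X := Finset.univ.filter (fun x => 0 < max (p x) (q x)) with hs
  have hout : ∀ x, x ∉ s → p x = 0 ∧ q x = 0 := by
    intro x hx
    simp only [hs, Finset.mem_filter, Finset.mem_univ, true_and, not_lt] at hx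
    have h1 : p x ≤ 0 := le_trans (le_max_left _ _) hx
    have h2 : q x ≤ 0 := le_trans (le_max_right _ _) hx
    exact ⟨le_antisymm h1 (hp0 x), le_antisymm h2 (hq0 x)⟩
  have habs : ∑ x, |p x - q x| = ∑ x ∈ s, |p x - q x| := by
    rw [← Finset.sum_subset (Finset.subset_univ s)]
    intro x _ hx
    rcases hout x hx with ⟨h1, h2⟩
    simp [h1, h2]
  have hS2 : ∑ x ∈ s, max (p x) (q x) ≤ 2 := by
    calc ∑ x ∈ s, max (p x) (q x) ≤ ∑ x ∈ s, (p x + q x) := by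
          apply Finset.sum_le_sum
          intro x _
          exact max_le (by linarith [hq0 x]) (by linarith [hp0 x])
      _ ≤ ∑ x, (p x + q x) := by
          apply Finset.sum_le_sum_of_subset_of_nonneg (Finset.subset_univ s)
          intro x _ _
          linarith [hp0 x, hq0 x]
      _ = 2 := by rw [Finset.sum_add_distrib, hp1, hq1]; norm_num
  have hcs := Finset.sq_sum_div_le_sum_sq_div s (fun x => |p x - q x|)
      (g := fun x => max (p x) (q x)) (fun x hx => by
        simpa [hs, Finset.mem_filter] using hx)
  have hsub : ∑ x ∈ s, |p x - q x| ^ 2 / max (p x) (q x)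
      ≤ ∑ x, (p x - q x) ^ 2 / max (p x) (q x) := by
    rw [show (fun x => |p x - q x| ^ 2 / max (p x) (q x))
        = fun x => (p x - q x) ^ 2 / max (p x) (q x) by funext x; rw [sq_abs]]
    apply Finset.sum_le_sum_of_subset_of_nonneg (Finset.subset_univ s)
    intro x _ _
    exact div_nonneg (sq_nonneg _) (le_trans (hp0 x) (le_max_left _ _))
  have hSpos : (0:ℝ) < ∑ x ∈ s, max (p x) (q x) := by
    have h1 : (1:ℝ) = ∑ x ∈ s, p x := by
      rw [← hp1, ← Finset.sum_subset (Finset.subset_univ s)]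
      intro x _ hx
      exact (hout x hx).1
    have h2 : ∑ x ∈ s, p x ≤ ∑ x ∈ s, max (p x) (q x) :=
      Finset.sum_le_sum fun x _ => le_max_left _ _
    linarith
  rw [habs]
  rw [div_le_iff₀ hSpos] at hcs
  calc (∑ x ∈ s, |p x - q x|) ^ 2
      ≤ (∑ x ∈ s, (fun x => |p x - q x| ^ 2 / max (p x) (q x)) x)
        * ∑ x ∈ s, max (p x) (q x) := hcs
    _ ≤ (∑ x, (p x - q x) ^ 2 / max (p x) (q x)) * 2 := by
        have hnn : (0:ℝ) ≤ ∑ x ∈ s, (fun x => |p x - q x| ^ 2 / max (p x) (q x)) x :=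
          Finset.sum_nonneg fun x _ =>
            div_nonneg (sq_nonneg _) (le_trans (hp0 x) (le_max_left _ _))
        apply mul_le_mul hsub hS2 ?_ (le_trans hnn hsub)
        exact Finset.sum_nonneg fun x _ => le_trans (hp0 x) (le_max_left _ _)
    _ = 2 * ∑ x, (p x - q x) ^ 2 / max (p x) (q x) := by ring


/-- Strong concavity of Shannon entropy with respect to total variation distance:
if `P` and `Q` are probability distributions on a finite set with total variation
distance `δ = ∑ x, |p x - q x|`, then
`H(εP + (1-ε)Q) ≥ ε H(P) + (1-ε) H(Q) + (1/4) ε (1-ε) δ²`. -/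
theorem entropy_strong_concave {X : Type*} [Fintype X] (p q : X → ℝ)
    (hp0 : ∀ x, 0 ≤ p x) (hq0 : ∀ x, 0 ≤ q x)
    (hp1 : ∑ x, p x = 1) (hq1 : ∑ x, q x = 1)
    (δ : ℝ) (hδ : δ = ∑ x, |p x - q x|)
    (ε : ℝ) (hε0 : 0 ≤ ε) (hε1 : ε ≤ 1) :
    (-∑ x, (ε * p x + (1 - ε) * q x) * Real.log (ε * p x + (1 - ε) * q x)) ≥
      ε * (-∑ x, p x * Real.log (p x)) + (1 - ε) * (-∑ x, q x * Real.log (q x))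
        + (1 / 4) * ε * (1 - ε) * δ ^ 2 := by
  classical
  set D : ℝ := ∑ x, (p x - q x) ^ 2 / max (p x) (q x) with hD
  have hB : δ ^ 2 ≤ 2 * D := by
    rw [hδ]
    exact aux_cs p q hp0 hq0 hp1 hq1
  have hA : (ε * (1 - ε) / 2) * D ≤
      ∑ x, (ε * (p x * Real.log (p x)) + (1 - ε) * (q x * Real.log (q x))
        - (ε * p x + (1 - ε) * q x) * Real.log (ε * p x + (1 - ε) * q x)) := by
    rw [hD, Finset.mul_sum]
    exact Finset.sum_le_sum fun x _ =>
      aux_pointwise (p x) (q x) ε (hp0 x) (hq0 x) hε0 hε1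
  have hsum : ∑ x, (ε * (p x * Real.log (p x)) + (1 - ε) * (q x * Real.log (q x))
        - (ε * p x + (1 - ε) * q x) * Real.log (ε * p x + (1 - ε) * q x))
      = ε * (∑ x, p x * Real.log (p x)) + (1 - ε) * (∑ x, q x * Real.log (q x))
        - ∑ x, (ε * p x + (1 - ε) * q x) * Real.log (ε * p x + (1 - ε) * q x) := by
    rw [Finset.sum_sub_distrib, Finset.sum_add_distrib, Finset.mul_sum, Finset.mul_sum]
  rw [hsum] at hA
  have hεε : 0 ≤ ε * (1 - ε) := mul_nonneg hε0 (by linarith)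
  nlinarith [hA, hB, hεε]
end

section
/- For real numbers p, q ≥ 0 with p + q > 0 and ε ∈ [0,1], the function h(z) = -z·log(z) (with h(0)=0) satisfies h(εp + (1-ε)q) ≥ ε·h(p) + (1-ε)·h(q) + (1/2)·ε·(1-ε)·(p-q)²/(p+q). -/
theorem key_lem (a b : ℝ) (ha : 0 ≤ a) (hb : 0 < b) :
    a - b + (a - b) ^ 2 / (2 * (a + b)) ≤ a * Real.log a - a * Real.log b := by
  rcases eq_or_lt_of_le ha with h0 | ha
  · have h1 : (a - b) ^ 2 / (2 * (a + b)) = b / 2 := by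
      rw [← h0]; field_simp; ring
    rw [← h0]
    have h1' : ((0:ℝ) - b) ^ 2 / (2 * (0 + b)) = b / 2 := by field_simp; ring
    have h2 : (0:ℝ) * Real.log 0 - 0 * Real.log b = 0 := by ring
    rw [h1', h2]
    linarith
  · set s := Real.sqrt (a / b) with hs_def
    have hab : 0 < a / b := div_pos ha hb
    have hs : 0 < s := Real.sqrt_pos.2 hab
    have hs2 : s ^ 2 = a / b := Real.sq_sqrt hab.le
    have hab2 : a = s ^ 2 * b := by rw [hs2]; field_simp
    have f1 : Real.log a - Real.log b = 2 * Real.log s := by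
      rw [← Real.log_div ha.ne' hb.ne', hs_def, Real.log_sqrt hab.le]; ring
    have f2 : 1 - 1 / s ≤ Real.log s := by
      have h := Real.log_le_sub_one_of_pos (show (0:ℝ) < 1 / s by positivity)
      rw [one_div, Real.log_inv] at h
      rw [one_div]
      linarith
    have h1 : (a - b) ^ 2 / (2 * (a + b)) ≤ (s - 1) ^ 2 * b := by
      rw [div_le_iff₀ (by positivity), hab2]
      nlinarith [mul_nonneg (sq_nonneg b) (sq_nonneg ((s-1)^2)), hb.le]
    have h3 : a * (2 * (1 - 1 / s)) ≤ a * (2 * Real.log s) :=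
      mul_le_mul_of_nonneg_left (by linarith) ha.le
    have e : a * (2 * (1 - 1 / s)) = a - b + (s - 1) ^ 2 * b := by
      rw [hab2]; field_simp; ring
    have h4 : a * Real.log a - a * Real.log b = a * (2 * Real.log s) := by
      rw [← mul_sub, f1]
    linarith

/-- Pointwise strong concavity of `h z = -z log z`: for `p, q ≥ 0` with `p + q > 0`
and `ε ∈ [0,1]`,
`h(εp + (1-ε)q) ≥ ε h(p) + (1-ε) h(q) + (1/2) ε (1-ε) (p-q)²/(p+q)`. -/
theorem neg_mul_log_strong_concave (p q ε : ℝ) (hp : 0 ≤ p) (hq : 0 ≤ q)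
    (hpq : 0 < p + q) (hε0 : 0 ≤ ε) (hε1 : ε ≤ 1) :
    -(ε * p + (1 - ε) * q) * Real.log (ε * p + (1 - ε) * q) ≥
      ε * (-p * Real.log p) + (1 - ε) * (-q * Real.log q)
        + (1 / 2) * ε * (1 - ε) * (p - q) ^ 2 / (p + q) := by
  have h1ε : 0 ≤ 1 - ε := by linarith
  set m := ε * p + (1 - ε) * q with hm_def
  have hm0 : 0 ≤ m := add_nonneg (mul_nonneg hε0 hp) (mul_nonneg h1ε hq)
  rcases eq_or_lt_of_le hm0 with hm | hm
  · -- m = 0 : both εp = 0 and (1-ε)q = 0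
    have hεp : ε * p = 0 := by nlinarith [mul_nonneg hε0 hp, mul_nonneg h1ε hq]
    have hεq : (1 - ε) * q = 0 := by nlinarith [mul_nonneg hε0 hp, mul_nonneg h1ε hq]
    have hS : ε * (1 - ε) = 0 := by
      rcases mul_eq_zero.1 hεp with h | h
      · rw [h]; ring
      · rcases mul_eq_zero.1 hεq with h' | h'
        · rw [h']; ring
        · exfalso; rw [h, h'] at hpq; linarith
    have t1 : ε * (-p * Real.log p) = 0 := by
      have : ε * p * Real.log p = 0 := by rw [hεp]; ring
      nlinarith [this]
    have t2 : (1 - ε) * (-q * Real.log q) = 0 := by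
      have : (1 - ε) * q * Real.log q = 0 := by rw [hεq]; ring
      nlinarith [this]
    rw [← hm, t1, t2]
    have : (1:ℝ) / 2 * ε * (1 - ε) * (p - q) ^ 2 / (p + q) = 0 := by
      rw [div_eq_zero_iff]; left; nlinarith [hS]
    rw [this]; simp
  · -- m > 0
    have hpm : 0 < p + m := by linarith
    have hqm : 0 < q + m := by linarith
    have A := key_lem p m hp hm
    have B := key_lem q m hq hm
    have A' : ε * (p - m + (p - m) ^ 2 / (2 * (p + m))) ≤
        ε * (p * Real.log p - p * Real.log m) := mul_le_mul_of_nonneg_left A hε0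
    have B' : (1 - ε) * (q - m + (q - m) ^ 2 / (2 * (q + m))) ≤
        (1 - ε) * (q * Real.log q - q * Real.log m) := mul_le_mul_of_nonneg_left B h1ε
    have hmm : m * Real.log m = ε * (p * Real.log m) + (1 - ε) * (q * Real.log m) := by
      rw [hm_def]; ring
    have halg : (1 / 2) * ε * (1 - ε) * (p - q) ^ 2 / (p + q) ≤
        ε * (p - m + (p - m) ^ 2 / (2 * (p + m)))
          + (1 - ε) * (q - m + (q - m) ^ 2 / (2 * (q + m))) := by
      have hpm' : (0:ℝ) < p + (ε * p + (1 - ε) * q) := by rw [← hm_def]; exact hpm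
      have hqm' : (0:ℝ) < q + (ε * p + (1 - ε) * q) := by rw [← hm_def]; exact hqm
      rw [hm_def]
      have e : ε * (p - (ε * p + (1 - ε) * q) + (p - (ε * p + (1 - ε) * q)) ^ 2 /
            (2 * (p + (ε * p + (1 - ε) * q))))
          + (1 - ε) * (q - (ε * p + (1 - ε) * q) + (q - (ε * p + (1 - ε) * q)) ^ 2 /
            (2 * (q + (ε * p + (1 - ε) * q))))
          - 1 / 2 * ε * (1 - ε) * (p - q) ^ 2 / (p + q)
          = (ε * (1 - ε) * (p - q) ^ 2) ^ 2 /
            (2 * (p + q) * (p + (ε * p + (1 - ε) * q)) * (q + (ε * p + (1 - ε) * q))) := by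
        field_simp
        ring
      have hpos : 0 ≤ (ε * (1 - ε) * (p - q) ^ 2) ^ 2 /
          (2 * (p + q) * (p + (ε * p + (1 - ε) * q)) * (q + (ε * p + (1 - ε) * q))) := by
        positivity
      linarith [e, hpos]
    linarith [A', B', halg]
end

section
/- Let G₁, G₂ be centered Gaussians on ℝ^N with positive definite covariance matrices Σ₁, Σ₂. Suppose for some indices i, j that |(Σ₁)_{ij} - (Σ₂)_{ij}| ≥ δ · ((Σ₁)_{ii} + (Σ₁)_{jj} + (Σ₂)_{ii} + (Σ₂)_{jj}). Then the total variation distance between G₁ and G₂ is at least c·δ for some universal constant c > 0. -/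
/-!
Evaluate both characteristic functions at one well-chosen frequency `u`. By polarization, one
of `e_i ± e_j`, rescaled by `(S₁ i i + S₁ j j + S₂ i i + S₂ j j)^(-1/2)`, gives a `u` at which
both quadratic forms are at most `2` and differ by at least `2δ`. On `[-1, ∞)` the exponential
grows at rate at least `e⁻¹`, so the characteristic functions `exp (-uᵀ Sₖ u / 2)` differ by at
least `e⁻¹ δ` at `u`. Finally, integrals of a test function bounded by `1` (here `cos ⟪u, ·⟫`)
against two finite measures differ by at most twice their total variation distance, as one sees
by splitting along a Hahn decomposition. This gives `c = e⁻¹ / 2`.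
-/

open Matrix MeasureTheory

lemma Real.exp_mul_abs_sub_le_abs_exp_sub {a x y : ℝ} (hx : a ≤ x) (hy : a ≤ y) :
    Real.exp a * |x - y| ≤ |Real.exp x - Real.exp y| := by
  wlog hxy : x ≤ y generalizing x y
  · rw [abs_sub_comm, abs_sub_comm (Real.exp x)]
    exact this hy hx (le_of_not_ge hxy)
  rw [abs_of_nonpos (sub_nonpos.2 hxy), abs_of_nonpos (sub_nonpos.2 (Real.exp_le_exp.2 hxy))]
  calc Real.exp a * -(x - y) ≤ Real.exp x * (y - x) := by rw [neg_sub]; gcongr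
    _ ≤ Real.exp x * (Real.exp (y - x) - 1) :=
        mul_le_mul_of_nonneg_left (by linarith [Real.add_one_le_exp (y - x)]) (Real.exp_pos x).le
    _ = -(Real.exp x - Real.exp y) := by rw [mul_sub, ← Real.exp_add]; ring_nf

namespace Matrix

variable {n : Type*} [Fintype n]

lemma smul_dotProduct_mulVec_smul {R : Type*} [CommRing R] (S : Matrix n n R) (t : R)
    (v : n → R) : (t • v) ⬝ᵥ (S *ᵥ (t • v)) = t ^ 2 * (v ⬝ᵥ (S *ᵥ v)) := by
  simp only [mulVec_smul, smul_dotProduct, dotProduct_smul, smul_eq_mul]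
  ring

variable [DecidableEq n]

lemma single_add_single_dotProduct_mulVec {R : Type*} [CommRing R] (S : Matrix n n R)
    (i j : n) (a b : R) :
    (Pi.single i a + Pi.single j b) ⬝ᵥ (S *ᵥ (Pi.single i a + Pi.single j b)) =
      a * a * S i i + a * b * (S i j + S j i) + b * b * S j j := by
  simp only [mulVec_add, mulVec_single, op_smul_eq_smul, dotProduct_add, dotProduct_smul,
    add_dotProduct, single_dotProduct, col_apply, smul_eq_mul]
  ring

lemma PosSemidef.exists_two_mul_abs_sub_le {S₁ S₂ : Matrix n n ℝ} (h₁ : S₁.PosSemidef)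
    (h₂ : S₂.PosSemidef) (i j : n) :
    ∃ v : n → ℝ, v ⬝ᵥ (S₁ *ᵥ v) ≤ 2 * (S₁ i i + S₁ j j) ∧
      v ⬝ᵥ (S₂ *ᵥ v) ≤ 2 * (S₂ i i + S₂ j j) ∧
      2 * |S₁ i j - S₂ i j| ≤ |v ⬝ᵥ (S₁ *ᵥ v) - v ⬝ᵥ (S₂ *ᵥ v)| := by
  -- The forms at `e_i + e_j` and `e_i - e_j` sum to `2 (S i i + S j j)` and differ by `4 S i j`.
  let v : ℝ → n → ℝ := fun ε => Pi.single i 1 + Pi.single j ε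
  have hq : ∀ {S : Matrix n n ℝ}, S.IsHermitian → ∀ ε,
      v ε ⬝ᵥ (S *ᵥ v ε) = S i i + 2 * ε * S i j + ε ^ 2 * S j j := by
    intro S hS ε
    rw [single_add_single_dotProduct_mulVec, ← hS.apply i j]
    simp only [mul_one, one_mul, star_trivial]
    ring
  have hle : ∀ {S : Matrix n n ℝ}, S.PosSemidef → ∀ ε : ℝ, ε ^ 2 = 1 →
      v ε ⬝ᵥ (S *ᵥ v ε) ≤ 2 * (S i i + S j j) := by
    intro S hS ε hε
    have h := hS.dotProduct_mulVec_nonneg (v (-ε))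
    simp only [star_trivial, hq hS.1, neg_sq, hε] at h
    rw [hq hS.1, hε]
    linarith
  have hsub : ∀ ε, v ε ⬝ᵥ (S₁ *ᵥ v ε) - v ε ⬝ᵥ (S₂ *ᵥ v ε) =
      (S₁ - S₂) i i + 2 * ε * (S₁ - S₂) i j + ε ^ 2 * (S₁ - S₂) j j := fun ε => by
    rw [← dotProduct_sub, ← sub_mulVec, hq (h₁.1.sub h₂.1)]
  obtain ⟨ε, hε, hd⟩ : ∃ ε : ℝ, ε ^ 2 = 1 ∧
      2 * |S₁ i j - S₂ i j| ≤ |v ε ⬝ᵥ (S₁ *ᵥ v ε) - v ε ⬝ᵥ (S₂ *ᵥ v ε)| := by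
    simp only [hsub, sub_apply]
    by_contra! h
    have hp := abs_lt.1 (h 1 (by norm_num))
    have hm := abs_lt.1 (h (-1) (by norm_num))
    rcases abs_cases (S₁ i j - S₂ i j) with ⟨hd, -⟩ | ⟨hd, -⟩ <;> rw [hd] at hp hm <;>
      linarith [hp.1, hp.2, hm.1, hm.2]
  exact ⟨v ε, hle h₁ ε hε, hle h₂ ε hε, hd⟩

lemma PosSemidef.exists_le_two_and_two_mul_le_abs_sub {S₁ S₂ : Matrix n n ℝ}
    (h₁ : S₁.PosSemidef) (h₂ : S₂.PosSemidef) {i j : n} {δ : ℝ}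
    (ha : 0 < S₁ i i + S₁ j j + S₂ i i + S₂ j j)
    (hδ : δ * (S₁ i i + S₁ j j + S₂ i i + S₂ j j) ≤ |S₁ i j - S₂ i j|) :
    ∃ u : n → ℝ, u ⬝ᵥ (S₁ *ᵥ u) ≤ 2 ∧ u ⬝ᵥ (S₂ *ᵥ u) ≤ 2 ∧
      2 * δ ≤ |u ⬝ᵥ (S₁ *ᵥ u) - u ⬝ᵥ (S₂ *ᵥ u)| := by
  set a := S₁ i i + S₁ j j + S₂ i i + S₂ j j
  obtain ⟨v, hv₁, hv₂, hv⟩ := h₁.exists_two_mul_abs_sub_le h₂ i j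
  have hscale : ∀ S : Matrix n n ℝ,
      ((√a)⁻¹ • v) ⬝ᵥ (S *ᵥ ((√a)⁻¹ • v)) = v ⬝ᵥ (S *ᵥ v) / a := fun S => by
    rw [smul_dotProduct_mulVec_smul, inv_pow, Real.sq_sqrt ha.le, inv_mul_eq_div]
  have := h₁.diag_nonneg (i := i); have := h₁.diag_nonneg (i := j)
  have := h₂.diag_nonneg (i := i); have := h₂.diag_nonneg (i := j)
  refine ⟨(√a)⁻¹ • v, ?_, ?_, ?_⟩
  · rw [hscale, div_le_iff₀ ha]; linarith
  · rw [hscale, div_le_iff₀ ha]; linarith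
  · rw [hscale, hscale, ← sub_div, abs_div, abs_of_pos ha, le_div_iff₀ ha]; linarith

end Matrix

namespace MeasureTheory.Measure

variable {α E : Type*} [MeasurableSpace α] [NormedAddCommGroup E] [NormedSpace ℝ E]

noncomputable def tvDist (μ ν : Measure α) : ℝ :=
  ⨆ s : {s : Set α // MeasurableSet s}, |μ.real s - ν.real s|

lemma abs_measureReal_sub_le_tvDist (μ ν : Measure α) [IsFiniteMeasure μ] [IsFiniteMeasure ν]
    {s : Set α} (hs : MeasurableSet s) : |μ.real s - ν.real s| ≤ tvDist μ ν := by
  refine le_ciSup (f := fun s : {s : Set α // MeasurableSet s} => |μ.real s - ν.real s|)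
    ⟨μ.real .univ + ν.real .univ, ?_⟩ ⟨s, hs⟩
  rintro _ ⟨t, rfl⟩
  calc |μ.real t - ν.real t| ≤ |μ.real t| + |ν.real t| := abs_sub _ _
    _ = μ.real t + ν.real t := by simp only [abs_of_nonneg measureReal_nonneg]
    _ ≤ μ.real .univ + ν.real .univ :=
        add_le_add (measureReal_mono (Set.subset_univ _)) (measureReal_mono (Set.subset_univ _))

lemma norm_integral_sub_integral_le_of_le {μ ν : Measure α} [IsFiniteMeasure μ] (hνμ : ν ≤ μ)
    {f : α → E} (hf : AEStronglyMeasurable f μ) (hf₁ : ∀ x, ‖f x‖ ≤ 1) :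
    ‖∫ x, f x ∂μ - ∫ x, f x ∂ν‖ ≤ μ.real .univ - ν.real .univ := by
  have : IsFiniteMeasure ν := isFiniteMeasure_of_le μ hνμ
  have : IsFiniteMeasure (μ - ν) := isFiniteMeasure_of_le μ sub_le
  have hfμ : Integrable f μ := .of_bound hf 1 (.of_forall hf₁)
  calc ‖∫ x, f x ∂μ - ∫ x, f x ∂ν‖ = ‖∫ x, f x ∂(μ - ν)‖ := by
        conv_lhs => rw [← sub_add_cancel_of_le hνμ]
        rw [integral_add_measure (hfμ.mono_measure sub_le) (hfμ.mono_measure hνμ),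
          add_sub_cancel_right]
    _ ≤ 1 * (μ - ν).real .univ := norm_integral_le_of_norm_le_const (.of_forall hf₁)
    _ = μ.real .univ - ν.real .univ := by
        conv_rhs => rw [← sub_add_cancel_of_le hνμ, measureReal_add_apply]
        ring

lemma norm_integral_sub_integral_le_two_mul_tvDist (μ ν : Measure α)
    [IsFiniteMeasure μ] [IsFiniteMeasure ν] {f : α → E} (hf : StronglyMeasurable f)
    (hf₁ : ∀ x, ‖f x‖ ≤ 1) :
    ‖∫ x, f x ∂μ - ∫ x, f x ∂ν‖ ≤ 2 * tvDist μ ν := by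
  obtain ⟨s, hs, hμν, hνμ⟩ := exists_isHahnDecomposition μ ν
  have hint : ∀ ρ : Measure α, [IsFiniteMeasure ρ] → Integrable f ρ := fun ρ _ =>
    .of_bound hf.aestronglyMeasurable 1 (.of_forall hf₁)
  have hs₁ := norm_integral_sub_integral_le_of_le hμν hf.aestronglyMeasurable hf₁
  have hs₂ := norm_integral_sub_integral_le_of_le hνμ hf.aestronglyMeasurable hf₁
  simp only [measureReal_restrict_apply_univ] at hs₁ hs₂
  have ht₁ := abs_le.1 (abs_measureReal_sub_le_tvDist μ ν hs)
  have ht₂ := abs_le.1 (abs_measureReal_sub_le_tvDist μ ν hs.compl)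
  calc ‖∫ x, f x ∂μ - ∫ x, f x ∂ν‖
      = ‖(∫ x in s, f x ∂ν - ∫ x in s, f x ∂μ) - (∫ x in sᶜ, f x ∂μ - ∫ x in sᶜ, f x ∂ν)‖ := by
        rw [← norm_neg, ← integral_add_compl hs (hint μ), ← integral_add_compl hs (hint ν)]
        congr 1; abel
    _ ≤ _ := norm_sub_le _ _
    _ ≤ 2 * tvDist μ ν := by linarith [ht₁.1, ht₂.2]

end MeasureTheory.Measure

/-- There is a universal constant `c > 0` such that: if two centered Gaussians on `ℝ^N`
(characterized by their real characteristic functions) have covariance matrices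
`Σ₁, Σ₂` satisfying `|(Σ₁)_{ij} - (Σ₂)_{ij}| ≥ δ ((Σ₁)_{ii}+(Σ₁)_{jj}+(Σ₂)_{ii}+(Σ₂)_{jj})`
for some indices `i, j`, then their total variation distance is at least `c δ`. -/
theorem tv_gaussians_lower_bound :
    ∃ c : ℝ, 0 < c ∧
      ∀ (N : ℕ) (S₁ S₂ : Matrix (Fin N) (Fin N) ℝ),
        S₁.PosDef → S₂.PosDef →
        ∀ (μ₁ μ₂ : Measure (Fin N → ℝ)),
          IsProbabilityMeasure μ₁ → IsProbabilityMeasure μ₂ →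
          (∀ u : Fin N → ℝ,
            ∫ x, Real.cos (u ⬝ᵥ x) ∂μ₁ = Real.exp (-(u ⬝ᵥ (S₁ *ᵥ u)) / 2)) →
          (∀ u : Fin N → ℝ,
            ∫ x, Real.cos (u ⬝ᵥ x) ∂μ₂ = Real.exp (-(u ⬝ᵥ (S₂ *ᵥ u)) / 2)) →
          ∀ (i j : Fin N) (δ : ℝ), 0 < δ →
            δ * (S₁ i i + S₁ j j + S₂ i i + S₂ j j) ≤ |S₁ i j - S₂ i j| →
            c * δ ≤
              ⨆ s : {s : Set (Fin N → ℝ) // MeasurableSet s},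
                |(μ₁ s.1).toReal - (μ₂ s.1).toReal| := by
  refine ⟨Real.exp (-1) / 2, by positivity, ?_⟩
  intro N S₁ S₂ hS₁ hS₂ μ₁ μ₂ _ _ hφ₁ hφ₂ i j δ _ hij
  show _ ≤ μ₁.tvDist μ₂
  obtain ⟨u, hu₁, hu₂, hu⟩ := hS₁.posSemidef.exists_le_two_and_two_mul_le_abs_sub
    hS₂.posSemidef
    (add_pos (add_pos (add_pos hS₁.diag_pos hS₁.diag_pos) hS₂.diag_pos) hS₂.diag_pos) hij
  have htv := Measure.norm_integral_sub_integral_le_two_mul_tvDist μ₁ μ₂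
    (f := fun x => Real.cos (u ⬝ᵥ x)) (by fun_prop) (fun x => Real.abs_cos_le_one _)
  rw [hφ₁, hφ₂, Real.norm_eq_abs] at htv
  set q₁ := u ⬝ᵥ (S₁ *ᵥ u)
  set q₂ := u ⬝ᵥ (S₂ *ᵥ u)
  have hexp := Real.exp_mul_abs_sub_le_abs_exp_sub (a := -1) (x := -q₁ / 2) (y := -q₂ / 2)
    (by linarith) (by linarith)
  rw [show -q₁ / 2 - -q₂ / 2 = -(q₁ - q₂) / 2 by ring, abs_div, abs_neg, abs_two] at hexp
  have hδq : Real.exp (-1) * (2 * δ) ≤ Real.exp (-1) * |q₁ - q₂| := by gcongr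
  linarith
end

section
/- Let Σ₁, Σ₂ be positive definite N × N matrices satisfying: for some i, j, |(Σ₁)_{ij} - (Σ₂)_{ij}| ≥ δ·((Σ₁)_{ii} + (Σ₁)_{jj} + (Σ₂)_{ii} + (Σ₂)_{jj}). Then for all ε ∈ [0,1], log det((1-ε)Σ₁ + εΣ₂) ≥ (1-ε)·log det(Σ₁) + ε·log det(Σ₂) + c·ε·(1-ε)·δ² for a universal constant c > 0. -/
/-!
Simultaneously diagonalise: choosing `G` with `G Gᵀ = Σ₁ + Σ₂`, one can write
`Σ₁ = G diag(x) Gᵀ` and `Σ₂ = G diag(y) Gᵀ` with `x + y = 1` and `x, y ∈ (0, 1]ⁿ`. The log det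
gap is then the sum over `k` of the concavity gaps of `log` between `x k` and `y k`, each at least
`ε (1 - ε) (x k - y k)² / 2` because `log` is `1`-strongly concave on `(0, 1]`. On the other hand
`Σ₁ - Σ₂ = G diag(x - y) Gᵀ`, and Cauchy–Schwarz bounds its `(i, j)` entry by
`‖x - y‖ √((Σ₁ + Σ₂)ᵢᵢ (Σ₁ + Σ₂)ⱼⱼ)`, so the hypothesis forces `‖x - y‖ ≥ 2δ`. This gives `c = 2`.
-/

open Set Matrix

lemma Real.strongConcaveOn_log_Ioc (M : ℝ) :
    StrongConcaveOn (Ioc 0 M) (M ^ 2)⁻¹ Real.log := by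
  rw [strongConcaveOn_iff_convex]
  simp only [Real.norm_eq_abs, sq_abs]
  refine concaveOn_of_hasDerivWithinAt2_nonpos (f' := fun x => x⁻¹ + (M ^ 2)⁻¹ * x)
    (f'' := fun x => -(x ^ 2)⁻¹ + (M ^ 2)⁻¹) (convex_Ioc 0 M)
    ((Real.continuousOn_log.mono fun x hx => hx.1.ne').add (by fun_prop)) ?_ ?_ ?_ <;>
    rw [interior_Ioc] <;> intro x hx
  · exact ((Real.hasDerivAt_log hx.1.ne').add
      (((hasDerivAt_pow 2 x).const_mul _).congr_deriv (by ring))).hasDerivWithinAt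
  · exact ((hasDerivAt_inv hx.1.ne').add
      (((hasDerivAt_id x).const_mul _).congr_deriv (by ring))).hasDerivWithinAt
  · linarith [inv_anti₀ (pow_pos hx.1 2) (pow_le_pow_left₀ hx.1.le hx.2.le 2)]

namespace Matrix

variable {n R : Type*} [Fintype n] [DecidableEq n] [CommRing R]

def diagonalCongr (G : Matrix n n R) : (n → R) →ₗ[R] Matrix n n R :=
  LinearMap.mulRight R Gᵀ ∘ₗ LinearMap.mulLeft R G ∘ₗ diagonalLinearMap n R R

lemma diagonalCongr_apply (G : Matrix n n R) (d : n → R) :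
    diagonalCongr G d = G * diagonal d * Gᵀ := rfl

lemma det_diagonalCongr (G : Matrix n n R) (d : n → R) :
    (diagonalCongr G d).det = G.det ^ 2 * ∏ k, d k := by
  rw [diagonalCongr_apply, det_mul, det_mul, det_transpose, det_diagonal]
  ring

lemma posDef_diagonalCongr_iff {G : Matrix n n ℝ} (hG : IsUnit G) {d : n → ℝ} :
    (diagonalCongr G d).PosDef ↔ ∀ k, 0 < d k := by
  rw [diagonalCongr_apply, ← conjTranspose_eq_transpose_of_trivial, ← star_eq_conjTranspose,
    hG.posDef_star_right_conjugate_iff, posDef_diagonal_iff]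

lemma diagonalCongr_apply_eq_sum (G : Matrix n n R) (d : n → R) (i j : n) :
    diagonalCongr G d i j = ∑ k, d k * (G i k * G j k) := by
  simp [diagonalCongr_apply, mul_apply, diagonal, mul_comm, mul_left_comm]

lemma sq_diagonalCongr_apply_le (G : Matrix n n ℝ) (d : n → ℝ) (i j : n) :
    diagonalCongr G d i j ^ 2 ≤
      (∑ k, d k ^ 2) * (diagonalCongr G 1 i i * diagonalCongr G 1 j j) := by
  simp only [diagonalCongr_apply_eq_sum, Pi.one_apply, one_mul, ← sq]
  calc (∑ k, d k * (G i k * G j k)) ^ 2 ≤ (∑ k, d k ^ 2) * ∑ k, (G i k * G j k) ^ 2 :=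
        Finset.sum_mul_sq_le_sq_mul_sq _ _ _
    _ ≤ (∑ k, d k ^ 2) * ∑ k, G i k ^ 2 * ∑ l, G j l ^ 2 := by
        gcongr with k
        rw [mul_pow]
        gcongr
        exact Finset.single_le_sum (f := fun l => G j l ^ 2) (fun l _ => sq_nonneg _)
          (Finset.mem_univ k)
    _ = _ := by rw [← Finset.sum_mul]

lemma IsHermitian.exists_diagonalCongr_eq {A : Matrix n n ℝ} (hA : A.IsHermitian) :
    ∃ V : Matrix n n ℝ, V * Vᵀ = 1 ∧ A = diagonalCongr V hA.eigenvalues := by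
  refine ⟨hA.eigenvectorUnitary, ?_, ?_⟩
  · rw [← conjTranspose_eq_transpose_of_trivial, ← star_eq_conjTranspose]
    exact Unitary.coe_mul_star_self _
  · conv_lhs => rw [hA.spectral_theorem]
    rw [Unitary.conjStarAlgAut_apply, diagonalCongr_apply, star_eq_conjTranspose,
      conjTranspose_eq_transpose_of_trivial]
    rfl

open scoped MatrixOrder in
lemma PosDef.exists_mul_transpose_eq {P : Matrix n n ℝ} (hP : P.PosDef) :
    ∃ S : Matrix n n ℝ, IsUnit S ∧ S * Sᵀ = P := by
  have hSS : CFC.sqrt P * CFC.sqrt P = P := CFC.sqrt_mul_sqrt_self P hP.posSemidef.nonneg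
  refine ⟨CFC.sqrt P, ?_, ?_⟩
  · exact isUnit_of_mul_isUnit_left (hSS ▸ hP.isUnit)
  · rw [← conjTranspose_eq_transpose_of_trivial,
      (CFC.sqrt_nonneg P).posSemidef.isHermitian.eq, hSS]

lemma exists_diagonalCongr_eq_of_posDef_add {A B : Matrix n n ℝ} (hA : A.IsHermitian)
    (hAB : (A + B).PosDef) :
    ∃ (G : Matrix n n ℝ) (x : n → ℝ), IsUnit G ∧
      A = diagonalCongr G x ∧ B = diagonalCongr G (1 - x) := by
  obtain ⟨S, hS, hSP⟩ := hAB.exists_mul_transpose_eq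
  have hX : (S⁻¹ * A * S⁻¹ᵀ).IsHermitian := by
    simpa [conjTranspose_eq_transpose_of_trivial] using
      isHermitian_mul_mul_conjTranspose S⁻¹ hA
  obtain ⟨V, hV, hXV⟩ := hX.exists_diagonalCongr_eq
  have hVunit : IsUnit V := IsUnit.of_mul_eq_one _ hV
  have hSinv : S * S⁻¹ = 1 := mul_nonsing_inv S ((isUnit_iff_isUnit_det S).1 hS)
  have hA' : A = diagonalCongr (S * V) hX.eigenvalues := by
    calc A = S * S⁻¹ * A * (S * S⁻¹)ᵀ := by
          rw [hSinv, transpose_one, Matrix.one_mul, Matrix.mul_one]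
      _ = S * diagonalCongr V hX.eigenvalues * Sᵀ := by
        rw [← hXV, transpose_mul]; simp only [Matrix.mul_assoc]
      _ = _ := by simp only [diagonalCongr_apply, transpose_mul, Matrix.mul_assoc]
  have hP' : A + B = diagonalCongr (S * V) 1 := by
    rw [diagonalCongr_apply, Pi.one_def, diagonal_one, Matrix.mul_one, transpose_mul,
      Matrix.mul_assoc, ← Matrix.mul_assoc V, hV, Matrix.one_mul, hSP]
  refine ⟨S * V, hX.eigenvalues, hS.mul hVunit, hA', ?_⟩
  rw [map_sub, ← hP', ← hA', add_sub_cancel_left]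

lemma log_det_diagonalCongr {G : Matrix n n ℝ} (hG : IsUnit G) {d : n → ℝ}
    (hd : ∀ k, 0 < d k) :
    Real.log (diagonalCongr G d).det = Real.log (G.det ^ 2) + ∑ k, Real.log (d k) := by
  have hdet : G.det ≠ 0 := ((isUnit_iff_isUnit_det G).1 hG).ne_zero
  rw [det_diagonalCongr, Real.log_mul (by positivity)
    (Finset.prod_ne_zero_iff.2 fun k _ => (hd k).ne'), Real.log_prod fun k _ => (hd k).ne']

lemma log_det_diagonalCongr_convexComb_ge {G : Matrix n n ℝ} (hG : IsUnit G) {M : ℝ}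
    {x y : n → ℝ} (hx : ∀ k, x k ∈ Ioc 0 M) (hy : ∀ k, y k ∈ Ioc 0 M) {ε : ℝ} (hε₀ : 0 ≤ ε)
    (hε₁ : ε ≤ 1) :
    (1 - ε) * Real.log (diagonalCongr G x).det + ε * Real.log (diagonalCongr G y).det
        + ε * (1 - ε) / (2 * M ^ 2) * ∑ k, (x k - y k) ^ 2
      ≤ Real.log (diagonalCongr G ((1 - ε) • x + ε • y)).det := by
  have hmix : ∀ k, ((1 - ε) • x + ε • y) k ∈ Ioc 0 M := fun k =>
    convex_Ioc 0 M (hx k) (hy k) (sub_nonneg.2 hε₁) hε₀ (sub_add_cancel 1 ε)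
  have hgap : ∀ k, (1 - ε) * Real.log (x k) + ε * Real.log (y k)
      + ε * (1 - ε) / (2 * M ^ 2) * (x k - y k) ^ 2 ≤ Real.log (((1 - ε) • x + ε • y) k) := by
    intro k
    have := (Real.strongConcaveOn_log_Ioc M).2 (hx k) (hy k) (sub_nonneg.2 hε₁) hε₀
      (sub_add_cancel 1 ε)
    simp only [smul_eq_mul, Real.norm_eq_abs, sq_abs] at this
    simp only [Pi.add_apply, Pi.smul_apply, smul_eq_mul]
    convert this using 2
    ring
  rw [log_det_diagonalCongr hG fun k => (hx k).1, log_det_diagonalCongr hG fun k => (hy k).1,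
    log_det_diagonalCongr hG fun k => (hmix k).1]
  have hsum := Finset.sum_le_sum fun k (_ : k ∈ Finset.univ) => hgap k
  rw [Finset.sum_add_distrib, Finset.sum_add_distrib, ← Finset.mul_sum, ← Finset.mul_sum,
    ← Finset.mul_sum] at hsum
  linarith

lemma four_mul_sq_le_sum_sq_of_mul_le_abs {G : Matrix n n ℝ} {d : n → ℝ} {i j : n} {δ : ℝ}
    (hδ : 0 ≤ δ) (hT : 0 < diagonalCongr G 1 i i + diagonalCongr G 1 j j)
    (h : δ * (diagonalCongr G 1 i i + diagonalCongr G 1 j j) ≤ |diagonalCongr G d i j|) :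
    4 * δ ^ 2 ≤ ∑ k, d k ^ 2 := by
  set T := diagonalCongr G 1 i i + diagonalCongr G 1 j j
  have hamgm : 4 * (diagonalCongr G 1 i i * diagonalCongr G 1 j j) ≤ T ^ 2 := by
    nlinarith [sq_nonneg (diagonalCongr G 1 i i - diagonalCongr G 1 j j)]
  have hsq : (δ * T) ^ 2 ≤ diagonalCongr G d i j ^ 2 := by
    rw [← sq_abs (diagonalCongr G d i j)]
    exact pow_le_pow_left₀ (by positivity) h 2
  have hentry := sq_diagonalCongr_apply_le G d i j
  have hd : 0 ≤ ∑ k, d k ^ 2 := by positivity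
  refine le_of_mul_le_mul_right ?_ (pow_pos hT 2)
  nlinarith

end Matrix

/-- Strong concavity of `log det`: there is a universal constant `c > 0` such that
if positive definite `Σ₁, Σ₂` satisfy
`|(Σ₁)_{ij} - (Σ₂)_{ij}| ≥ δ ((Σ₁)_{ii}+(Σ₁)_{jj}+(Σ₂)_{ii}+(Σ₂)_{jj})` for some `i, j`,
then `log det ((1-ε)Σ₁ + εΣ₂) ≥ (1-ε) log det Σ₁ + ε log det Σ₂ + c ε (1-ε) δ²`
for all `ε ∈ [0,1]`. -/
theorem logdet_strong_concave :
    ∃ c : ℝ, 0 < c ∧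
      ∀ (N : ℕ) (S₁ S₂ : Matrix (Fin N) (Fin N) ℝ),
        S₁.PosDef → S₂.PosDef →
        ∀ (i j : Fin N) (δ : ℝ), 0 < δ →
          δ * (S₁ i i + S₁ j j + S₂ i i + S₂ j j) ≤ |S₁ i j - S₂ i j| →
          ∀ ε : ℝ, 0 ≤ ε → ε ≤ 1 →
            Real.log ((1 - ε) • S₁ + ε • S₂).det ≥
              (1 - ε) * Real.log S₁.det + ε * Real.log S₂.det
                + c * ε * (1 - ε) * δ ^ 2 := by
  refine ⟨2, two_pos, fun N A B hA hB i j δ hδ hij ε hε₀ hε₁ => ?_⟩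
  obtain ⟨G, x, hG, rfl, rfl⟩ := exists_diagonalCongr_eq_of_posDef_add hA.isHermitian (hA.add hB)
  set y : Fin N → ℝ := 1 - x
  have hP : diagonalCongr G x + diagonalCongr G y = diagonalCongr G 1 := by
    rw [← map_add, add_sub_cancel]
  have hT : 0 < diagonalCongr G 1 i i + diagonalCongr G 1 j j :=
    have hPpos := hP ▸ hA.add hB
    add_pos hPpos.diag_pos hPpos.diag_pos
  have hsep : 4 * δ ^ 2 ≤ ∑ k, (x k - y k) ^ 2 := by
    refine four_mul_sq_le_sum_sq_of_mul_le_abs (d := x - y) hδ.le hT ?_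
    rw [map_sub, ← hP, Matrix.sub_apply, Matrix.add_apply, Matrix.add_apply]
    linarith
  rw [posDef_diagonalCongr_iff hG] at hA hB
  have hy : ∀ k, y k = 1 - x k := fun k => rfl
  have hgap := log_det_diagonalCongr_convexComb_ge hG (M := 1)
    (fun k => ⟨hA k, by linarith [hB k, hy k]⟩) (fun k => ⟨hB k, by linarith [hA k, hy k]⟩)
    hε₀ hε₁
  rw [← map_smul, ← map_smul, ← map_add]
  simp only [one_pow, mul_one] at hgap
  nlinarith [mul_nonneg hε₀ (sub_nonneg.2 hε₁)]
end
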